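/- Let n ≥ 1, let i ≥ 1, and let A be an n×n real diagonal matrix. Let r₀ ∈ ℝⁿ be an initial value all of whose coordinates are nonzero. If the i-th curvature κ_i(t) of the trajectory t ↦ e^{tA} r₀ does not converge to 0 as t → +∞ (i.e. the limit is nonzero or does not exist), then the zero solution of the system ṙ(t) = A r(t) is stable. -/

import Mathlib

open Filter MeasureTheory

/-- The trajectory `t ↦ e^{tA} r₀` of the linear system `ṙ = A r`. -/
noncomputable def traj {n : ℕ} (A : Matrix (Fin n) (Fin n) ℝ) (r₀ : Fin n → ℝ) (t : ℝ) :
    Fin n → ℝ :=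
  (NormedSpace.exp (t • A)).mulVec r₀

/-- The Gram determinant `G_k(t) = det (⟨A^a e^{tA} r₀, A^b e^{tA} r₀⟩)_{1 ≤ a,b ≤ k}` of the
first `k` derivatives of the trajectory. -/
noncomputable def gram {n : ℕ} (A : Matrix (Fin n) (Fin n) ℝ) (r₀ : Fin n → ℝ) (k : ℕ)
    (t : ℝ) : ℝ :=
  Matrix.det (Matrix.of fun a b : Fin k =>
    dotProduct ((A ^ ((a : ℕ) + 1)).mulVec (traj A r₀ t))
      ((A ^ ((b : ℕ) + 1)).mulVec (traj A r₀ t)))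

/-- `V_k(t) = √(G_k(t))`, the `k`-dimensional volume of the parallelotope spanned by the first
`k` derivatives, with the convention `V₀(t) = 1`. -/
noncomputable def vol {n : ℕ} (A : Matrix (Fin n) (Fin n) ℝ) (r₀ : Fin n → ℝ) (k : ℕ)
    (t : ℝ) : ℝ :=
  if k = 0 then 1 else Real.sqrt (gram A r₀ k t)

/-- The `i`-th curvature `κ_i(t) = V_{i-1}(t) V_{i+1}(t) / (V₁(t) V_i(t)²)` of the trajectory
(equal to `0` when the denominator vanishes, by the Lean convention `x / 0 = 0`). -/
noncomputable def curvature {n : ℕ} (A : Matrix (Fin n) (Fin n) ℝ) (r₀ : Fin n → ℝ)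
    (i : ℕ) (t : ℝ) : ℝ :=
  (vol A r₀ (i - 1) t * vol A r₀ (i + 1) t) / (vol A r₀ 1 t * (vol A r₀ i t) ^ 2)

/-- The torsion `τ(t) = √(G₃(t)) / G₂(t)` of the trajectory (equal to `0` when `G₂(t) = 0`,
by the Lean convention `x / 0 = 0`). -/
noncomputable def torsion {n : ℕ} (A : Matrix (Fin n) (Fin n) ℝ) (r₀ : Fin n → ℝ)
    (t : ℝ) : ℝ :=
  Real.sqrt (gram A r₀ 3 t) / gram A r₀ 2 t

/-- The Euclidean norm on `ℝⁿ`. -/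
noncomputable def euclNorm {n : ℕ} (x : Fin n → ℝ) : ℝ :=
  Real.sqrt (∑ j, x j ^ 2)

/-- Stability of the zero solution of `ṙ = A r`. -/
def IsStable {n : ℕ} (A : Matrix (Fin n) (Fin n) ℝ) : Prop :=
  ∀ ε > (0 : ℝ), ∃ δ > (0 : ℝ), ∀ r₀ : Fin n → ℝ, euclNorm r₀ < δ →
    ∀ t ≥ (0 : ℝ), euclNorm (traj A r₀ t) < ε

/-- Asymptotic stability of the zero solution of `ṙ = A r`. -/
def IsAsympStable {n : ℕ} (A : Matrix (Fin n) (Fin n) ℝ) : Prop :=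
  IsStable A ∧ ∃ δ > (0 : ℝ), ∀ r₀ : Fin n → ℝ, euclNorm r₀ < δ →
    Filter.Tendsto (fun t => traj A r₀ t) Filter.atTop (nhds 0)


section Auxiliary

open Matrix Finset

lemma traj_diagonal {n : ℕ} (d : Fin n → ℝ) (r₀ : Fin n → ℝ) (t : ℝ) (j : Fin n) :
    traj (Matrix.diagonal d) r₀ t j = Real.exp (t * d j) * r₀ j := by
  rw [traj, ← Matrix.diagonal_smul, Matrix.exp_diagonal, Matrix.mulVec_diagonal]
  congr 1
  rw [Pi.coe_exp]
  simp [Real.exp_eq_exp_ℝ]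

lemma isStable_of_nonpos {n : ℕ} {d : Fin n → ℝ} (hd : ∀ j, d j ≤ 0) :
    IsStable (Matrix.diagonal d) := by
  intro ε hε
  refine ⟨ε, hε, fun r₀ hr t ht => lt_of_le_of_lt ?_ hr⟩
  unfold euclNorm
  apply Real.sqrt_le_sqrt
  apply Finset.sum_le_sum
  intro j _
  rw [traj_diagonal, mul_pow]
  have h1 : Real.exp (t * d j) ≤ 1 := by
    rw [Real.exp_le_one_iff]
    exact mul_nonpos_of_nonneg_of_nonpos ht (hd j)
  have h0 : (0:ℝ) ≤ Real.exp (t * d j) := (Real.exp_pos _).le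
  have h2 : Real.exp (t * d j) ^ 2 ≤ 1 := pow_le_one₀ h0 h1
  nlinarith [sq_nonneg (r₀ j)]


lemma cauchy_binet {k n : ℕ} (B : Matrix (Fin n) (Fin k) ℝ) :
    (k.factorial : ℝ) * (Bᵀ * B).det = ∑ f : Fin k → Fin n, ((B.submatrix f id).det) ^ 2 := by
  classical
  have step1 : (Bᵀ * B).det
      = ∑ f : Fin k → Fin n, (∏ a, B (f a) a) * (B.submatrix f id).det := by
    have h1 : (Bᵀ * B).det
        = (Matrix.detRowAlternating (R := ℝ) (n := Fin k)).toMultilinearMap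
            (fun a : Fin k => ∑ j : Fin n, B j a • (fun b => B j b)) := by
      congr 1
      ext a b
      simp [Matrix.mul_apply, Finset.sum_apply]
    rw [h1, MultilinearMap.map_sum]
    refine Finset.sum_congr rfl fun f _ => ?_
    rw [MultilinearMap.map_smul_univ]
    rfl
  have expand : ∀ f : Fin k → Fin n, ((B.submatrix f id).det) ^ 2
      = ∑ σ : Equiv.Perm (Fin k),
          (Equiv.Perm.sign σ : ℝ) * ((∏ a, B (f (σ a)) a) * (B.submatrix f id).det) := by
    intro f
    rw [sq]
    nth_rewrite 1 [Matrix.det_apply' (B.submatrix f id)]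
    rw [Finset.sum_mul]
    refine Finset.sum_congr rfl fun σ _ => ?_
    simp only [Matrix.submatrix_apply, id_eq, mul_assoc]
  rw [Finset.sum_congr rfl fun f _ => expand f, Finset.sum_comm]
  have key : ∀ σ : Equiv.Perm (Fin k),
      (∑ f : Fin k → Fin n,
        (Equiv.Perm.sign σ : ℝ) * ((∏ a, B (f (σ a)) a) * (B.submatrix f id).det))
      = (Bᵀ * B).det := by
    intro σ
    rw [← Equiv.sum_comp (Equiv.arrowCongr σ (Equiv.refl (Fin n)))]
    have hterm : ∀ g : Fin k → Fin n,
        (Equiv.Perm.sign σ : ℝ) *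
          ((∏ a, B (((Equiv.arrowCongr σ (Equiv.refl (Fin n))) g) (σ a)) a) *
            (B.submatrix ((Equiv.arrowCongr σ (Equiv.refl (Fin n))) g) id).det)
        = (∏ a, B (g a) a) * (B.submatrix g id).det := by
      intro g
      have hg : (Equiv.arrowCongr σ (Equiv.refl (Fin n))) g = g ∘ σ.symm := rfl
      have h2 : (B.submatrix (g ∘ σ.symm) id) = (B.submatrix g id).submatrix σ.symm id := rfl
      have h3 : ((B.submatrix g id).submatrix σ.symm id).det
          = ((Equiv.Perm.sign σ.symm : ℤ) : ℝ) * (B.submatrix g id).det := by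
        rw [Matrix.det_permute]
      have h4 : ∀ a, ((Equiv.arrowCongr σ (Equiv.refl (Fin n))) g) (σ a) = g a := by
        intro a; simp [hg]
      have hsign : (Equiv.Perm.sign σ : ℝ) * ((Equiv.Perm.sign σ.symm : ℤ) : ℝ) = 1 := by
        rw [Equiv.Perm.sign_symm]
        rcases Int.units_eq_one_or (Equiv.Perm.sign σ) with h | h <;> simp [h]
      calc (Equiv.Perm.sign σ : ℝ) *
            ((∏ a, B (((Equiv.arrowCongr σ (Equiv.refl (Fin n))) g) (σ a)) a) *
              (B.submatrix ((Equiv.arrowCongr σ (Equiv.refl (Fin n))) g) id).det)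
          = (Equiv.Perm.sign σ : ℝ) * ((∏ a, B (g a) a) *
              (((Equiv.Perm.sign σ.symm : ℤ) : ℝ) * (B.submatrix g id).det)) := by
            rw [Finset.prod_congr rfl fun a _ => by rw [h4 a], hg, h2, h3]
        _ = ((Equiv.Perm.sign σ : ℝ) * ((Equiv.Perm.sign σ.symm : ℤ) : ℝ)) *
              ((∏ a, B (g a) a) * (B.submatrix g id).det) := by ring
        _ = (∏ a, B (g a) a) * (B.submatrix g id).det := by rw [hsign, one_mul]
    rw [Finset.sum_congr rfl fun g _ => hterm g, ← step1]
  rw [Finset.sum_congr rfl fun σ _ => key σ, Finset.sum_const, Finset.card_univ]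
  simp [mul_comm, Fintype.card_perm]

/-- expansion of the Gram determinant for a diagonal system -/
lemma gram_expansion {n : ℕ} (d r₀ : Fin n → ℝ) (k : ℕ) (t : ℝ) :
    (k.factorial : ℝ) * gram (Matrix.diagonal d) r₀ k t
      = ∑ f : Fin k → Fin n,
          ((∏ a, d (f a) * r₀ (f a)) ^ 2 * (Matrix.vandermonde (d ∘ f)).det ^ 2)
            * Real.exp (2 * t * ∑ a, d (f a)) := by
  classical
  set B : Matrix (Fin n) (Fin k) ℝ :=
    Matrix.of fun j (a : Fin k) => d j ^ ((a : ℕ) + 1) * (r₀ j * Real.exp (t * d j)) with hB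
  have hgram : gram (Matrix.diagonal d) r₀ k t = (Bᵀ * B).det := by
    unfold _root_.gram
    congr 1
    ext a b
    rw [Matrix.mul_apply]
    simp only [Matrix.of_apply, dotProduct]
    refine Finset.sum_congr rfl fun j _ => ?_
    rw [Matrix.diagonal_pow, Matrix.diagonal_pow, Matrix.mulVec_diagonal, Matrix.mulVec_diagonal]
    simp only [hB, Matrix.transpose_apply, Matrix.of_apply, traj_diagonal, Pi.pow_apply]
    ring
  rw [hgram, cauchy_binet B]
  refine Finset.sum_congr rfl fun f _ => ?_
  have hsub : (B.submatrix f id).det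
      = (∏ a, d (f a) * (r₀ (f a) * Real.exp (t * d (f a))))
          * (Matrix.vandermonde (d ∘ f)).det := by
    rw [← Matrix.det_mul_column]
    congr 1
    ext a b
    simp only [hB, Matrix.submatrix_apply, Matrix.of_apply, id_eq, Matrix.vandermonde_apply,
      Function.comp_apply]
    rw [pow_succ]
    ring
  rw [hsub, mul_pow, Finset.prod_mul_distrib, mul_pow]
  have hexp : (∏ a, (r₀ (f a) * Real.exp (t * d (f a)))) ^ 2
      = (∏ a, r₀ (f a)) ^ 2 * Real.exp (2 * t * ∑ a, d (f a)) := by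
    rw [Finset.prod_mul_distrib, mul_pow, ← Real.exp_sum]
    congr 1
    rw [← Real.exp_nat_mul]
    congr 1
    push_cast
    rw [Finset.mul_sum Finset.univ (fun a => d (f a)) (2 * t)]
    rw [Finset.mul_sum Finset.univ (fun x => t * d (f x)) 2]
    exact Finset.sum_congr rfl fun a _ => by ring
  rw [hexp, Finset.prod_mul_distrib, mul_pow]
  ring

/-- max sum of a k-element subset of F, or junk 0 -/
noncomputable def msum (F : Finset ℝ) (k : ℕ) : ℝ :=
  if h : k ≤ F.card then
    (F.powersetCard k).sup' (Finset.powersetCard_nonempty.2 h) (fun T => ∑ x ∈ T, x)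
  else 0

lemma sum_le_msum {F : Finset ℝ} {k : ℕ} {T : Finset ℝ} (hT : T ∈ F.powersetCard k) :
    ∑ x ∈ T, x ≤ msum F k := by
  have h : k ≤ F.card := by
    obtain ⟨hsub, hcard⟩ := Finset.mem_powersetCard.1 hT
    exact hcard ▸ Finset.card_le_card hsub
  rw [msum, dif_pos h]
  exact Finset.le_sup' (fun T : Finset ℝ => ∑ x ∈ T, x) hT

lemma exists_msum {F : Finset ℝ} {k : ℕ} (h : k ≤ F.card) :
    ∃ T ∈ F.powersetCard k, ∑ x ∈ T, x = msum F k := by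
  rw [msum, dif_pos h]
  obtain ⟨T, hT, hv⟩ := Finset.exists_mem_eq_sup' (Finset.powersetCard_nonempty.2 h)
    (fun T : Finset ℝ => ∑ x ∈ T, x)
  exact ⟨T, hT, hv.symm⟩

lemma msum_zero (F : Finset ℝ) : msum F 0 = 0 := by
  rw [msum, dif_pos (Nat.zero_le _)]
  apply le_antisymm
  · apply Finset.sup'_le
    intro T hT
    obtain ⟨-, hcard⟩ := Finset.mem_powersetCard.1 hT
    rw [Finset.card_eq_zero.1 hcard]
    simp
  · have : (∅ : Finset ℝ) ∈ F.powersetCard 0 := by simp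
    simpa using Finset.le_sup' (fun T : Finset ℝ => ∑ x ∈ T, x) this

lemma le_msum_one {F : Finset ℝ} {x : ℝ} (hx : x ∈ F) : x ≤ msum F 1 := by
  have : ({x} : Finset ℝ) ∈ F.powersetCard 1 := by
    rw [Finset.mem_powersetCard]
    exact ⟨Finset.singleton_subset_iff.2 hx, rfl⟩
  simpa using sum_le_msum this

lemma msum_concave {F : Finset ℝ} {j : ℕ} (h : j + 2 ≤ F.card) :
    msum F (j + 2) + msum F j ≤ msum F (j + 1) + msum F (j + 1) := by
  obtain ⟨T₂, hT₂, hs₂⟩ := exists_msum h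
  obtain ⟨T₀, hT₀, hs₀⟩ := exists_msum (k := j) (le_trans (by omega) h)
  obtain ⟨hT₂sub, hT₂card⟩ := Finset.mem_powersetCard.1 hT₂
  obtain ⟨hT₀sub, hT₀card⟩ := Finset.mem_powersetCard.1 hT₀
  have hns : ¬ T₂ ⊆ T₀ := by
    intro hsub
    have := Finset.card_le_card hsub
    omega
  obtain ⟨x, hxT₂, hxT₀⟩ := Finset.not_subset.1 hns
  have h1 : insert x T₀ ∈ F.powersetCard (j + 1) := by
    rw [Finset.mem_powersetCard]
    refine ⟨Finset.insert_subset (hT₂sub hxT₂) hT₀sub, ?_⟩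
    rw [Finset.card_insert_of_notMem hxT₀, hT₀card]
  have h2 : T₂.erase x ∈ F.powersetCard (j + 1) := by
    rw [Finset.mem_powersetCard]
    refine ⟨(Finset.erase_subset _ _).trans hT₂sub, ?_⟩
    rw [Finset.card_erase_of_mem hxT₂, hT₂card]
    omega
  have e1 : ∑ y ∈ insert x T₀, y = x + ∑ y ∈ T₀, y := Finset.sum_insert hxT₀
  have e2 : ∑ y ∈ T₂.erase x, y + x = ∑ y ∈ T₂, y := Finset.sum_erase_add _ _ hxT₂
  have b1 := sum_le_msum h1
  have b2 := sum_le_msum h2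
  rw [← hs₂, ← hs₀]
  linarith

/-- the set of distinct nonzero values of `d` -/
noncomputable def dvals {n : ℕ} (d : Fin n → ℝ) : Finset ℝ :=
  (Finset.univ.image d).filter (· ≠ 0)

lemma sigma_le_msum {n k : ℕ} (d : Fin n → ℝ) {f : Fin k → Fin n}
    (hinj : Function.Injective (d ∘ f)) (hnz : ∀ a, d (f a) ≠ 0) :
    ∑ a, d (f a) ≤ msum (dvals d) k := by
  classical
  have hmem : Finset.univ.image (d ∘ f) ∈ (dvals d).powersetCard k := by
    rw [Finset.mem_powersetCard]
    constructor
    · intro x hx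
      obtain ⟨a, -, rfl⟩ := Finset.mem_image.1 hx
      exact Finset.mem_filter.2 ⟨Finset.mem_image.2 ⟨f a, Finset.mem_univ _, rfl⟩, hnz a⟩
    · rw [Finset.card_image_of_injective _ hinj, Finset.card_univ, Fintype.card_fin]
  have hsum : ∑ x ∈ Finset.univ.image (d ∘ f), x = ∑ a, d (f a) := by
    rw [Finset.sum_image (fun a _ b _ h => hinj h)]
    rfl
  rw [← hsum]
  exact sum_le_msum hmem

lemma exists_good {n k : ℕ} (d : Fin n → ℝ) (h : k ≤ (dvals d).card) :
    ∃ f : Fin k → Fin n, Function.Injective (d ∘ f) ∧ (∀ a, d (f a) ≠ 0) ∧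
      ∑ a, d (f a) = msum (dvals d) k := by
  classical
  obtain ⟨T, hT, hsum⟩ := exists_msum h
  obtain ⟨hTsub, hTcard⟩ := Finset.mem_powersetCard.1 hT
  have hext : ∀ x : ℝ, x ∈ T → ∃ jx : Fin n, d jx = x := by
    intro x hx
    have := (Finset.mem_filter.1 (hTsub hx)).1
    obtain ⟨jx, -, hjx⟩ := Finset.mem_image.1 this
    exact ⟨jx, hjx⟩
  choose g hg using hext
  let e := T.orderIsoOfFin hTcard
  refine ⟨fun a => g (e a).1 (e a).2, ?_, ?_, ?_⟩
  · intro a b hab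
    have : ((e a : T) : ℝ) = ((e b : T) : ℝ) := by
      rw [← hg _ (e a).2, ← hg _ (e b).2]
      exact hab
    exact e.injective (Subtype.ext this)
  · intro a
    show d (g (e a).1 (e a).2) ≠ 0
    rw [hg _ (e a).2]
    exact (Finset.mem_filter.1 (hTsub (e a).2)).2
  · have : ∀ a : Fin k, d (g (e a).1 (e a).2) = ((e a : T) : ℝ) := fun a => hg _ (e a).2
    rw [Finset.sum_congr rfl (fun a _ => this a)]
    rw [← hsum, ← Finset.sum_coe_sort T (fun x => x)]
    exact Equiv.sum_comp e.toEquiv (fun x : T => (x : ℝ))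

/-- coefficient in the expansion of the Gram determinant -/
noncomputable def beta {n : ℕ} (d r₀ : Fin n → ℝ) {k : ℕ} (f : Fin k → Fin n) : ℝ :=
  (∏ a, d (f a) * r₀ (f a)) ^ 2 * (Matrix.vandermonde (d ∘ f)).det ^ 2

lemma beta_nonneg {n k : ℕ} (d r₀ : Fin n → ℝ) (f : Fin k → Fin n) :
    0 ≤ beta d r₀ f := mul_nonneg (sq_nonneg _) (sq_nonneg _)

lemma beta_pos {n k : ℕ} {d r₀ : Fin n → ℝ} (hr : ∀ j, r₀ j ≠ 0) {f : Fin k → Fin n}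
    (hinj : Function.Injective (d ∘ f)) (hnz : ∀ a, d (f a) ≠ 0) :
    0 < beta d r₀ f := by
  have h1 : (∏ a, d (f a) * r₀ (f a)) ≠ 0 :=
    Finset.prod_ne_zero_iff.2 fun a _ => mul_ne_zero (hnz a) (hr _)
  have h2 : (Matrix.vandermonde (d ∘ f)).det ≠ 0 :=
    Matrix.det_vandermonde_ne_zero_iff.2 hinj
  exact mul_pos (lt_of_le_of_ne (sq_nonneg _) (Ne.symm (pow_ne_zero 2 h1)))
    (lt_of_le_of_ne (sq_nonneg _) (Ne.symm (pow_ne_zero 2 h2)))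

lemma beta_eq_zero {n k : ℕ} {d r₀ : Fin n → ℝ} {f : Fin k → Fin n}
    (h : ¬ (Function.Injective (d ∘ f) ∧ ∀ a, d (f a) ≠ 0)) :
    beta d r₀ f = 0 := by
  rw [not_and_or] at h
  rcases h with h | h
  · have : (Matrix.vandermonde (d ∘ f)).det = 0 := by
      by_contra hne
      exact h (Matrix.det_vandermonde_ne_zero_iff.1 hne)
    rw [beta, this]
    ring
  · push_neg at h
    obtain ⟨a, ha⟩ := h
    have : (∏ b, d (f b) * r₀ (f b)) = 0 :=
      Finset.prod_eq_zero (Finset.mem_univ a) (by rw [ha]; ring)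
    rw [beta, this]
    ring

lemma gram_eq {n : ℕ} (d r₀ : Fin n → ℝ) (k : ℕ) (t : ℝ) :
    gram (Matrix.diagonal d) r₀ k t
      = (k.factorial : ℝ)⁻¹ *
          ∑ f : Fin k → Fin n, beta d r₀ f * Real.exp (2 * t * ∑ a, d (f a)) := by
  have hfac : (k.factorial : ℝ) ≠ 0 := Nat.cast_ne_zero.2 k.factorial_ne_zero
  field_simp
  rw [mul_comm]
  exact gram_expansion d r₀ k t

lemma gram_nonneg {n : ℕ} (d r₀ : Fin n → ℝ) (k : ℕ) (t : ℝ) :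
    0 ≤ gram (Matrix.diagonal d) r₀ k t := by
  rw [gram_eq]
  apply mul_nonneg (by positivity)
  apply Finset.sum_nonneg
  intro f _
  exact mul_nonneg (beta_nonneg d r₀ f) (Real.exp_nonneg _)

lemma gram_le {n : ℕ} (d r₀ : Fin n → ℝ) (k : ℕ) {t : ℝ} (ht : 0 ≤ t) :
    gram (Matrix.diagonal d) r₀ k t
      ≤ ((k.factorial : ℝ)⁻¹ * ∑ f : Fin k → Fin n, beta d r₀ f)
          * Real.exp (2 * t * msum (dvals d) k) := by
  rw [gram_eq, mul_assoc, Finset.sum_mul]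
  apply mul_le_mul_of_nonneg_left ?_ (by positivity)
  apply Finset.sum_le_sum
  intro f _
  by_cases hgood : Function.Injective (d ∘ f) ∧ ∀ a, d (f a) ≠ 0
  · apply mul_le_mul_of_nonneg_left ?_ (beta_nonneg d r₀ f)
    apply Real.exp_le_exp.2
    have := sigma_le_msum d hgood.1 hgood.2
    nlinarith
  · rw [beta_eq_zero hgood]
    simp

set_option maxHeartbeats 1000000 in
lemma gram_ge {n : ℕ} {d : Fin n → ℝ} (r₀ : Fin n → ℝ) (hr : ∀ j, r₀ j ≠ 0) {k : ℕ}
    (hk : k ≤ (dvals d).card) :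
    ∃ L > (0:ℝ), ∀ t : ℝ, L * Real.exp (2 * t * msum (dvals d) k)
      ≤ gram (Matrix.diagonal d) r₀ k t := by
  obtain ⟨f, hinj, hnz, hs⟩ := exists_good d hk
  have hfac : (0:ℝ) < (k.factorial : ℝ)⁻¹ := by positivity
  have hL : (0:ℝ) < (k.factorial : ℝ)⁻¹ * beta d r₀ f := mul_pos hfac (beta_pos hr hinj hnz)
  refine ⟨(k.factorial : ℝ)⁻¹ * beta d r₀ f, hL, fun t => ?_⟩
  rw [gram_eq, mul_assoc]
  apply mul_le_mul_of_nonneg_left ?_ (by positivity)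
  rw [← hs]
  exact Finset.single_le_sum
    (f := fun g : Fin k → Fin n => beta d r₀ g * Real.exp (2 * t * ∑ a, d (g a)))
    (fun g _ => mul_nonneg (beta_nonneg d r₀ g) (Real.exp_nonneg _)) (Finset.mem_univ f)

lemma vol_sqrt {n : ℕ} (A : Matrix (Fin n) (Fin n) ℝ) (r₀ : Fin n → ℝ) (k : ℕ) (t : ℝ) :
    vol A r₀ k t = Real.sqrt (gram A r₀ k t) := by
  rw [vol]
  split_ifs with h
  · subst h
    rw [_root_.gram, Matrix.det_isEmpty, Real.sqrt_one]
  · rfl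

lemma sqrt_mul_exp {x s : ℝ} (hx : 0 ≤ x) (t : ℝ) :
    Real.sqrt (x * Real.exp (2 * t * s)) = Real.sqrt x * Real.exp (t * s) := by
  rw [Real.sqrt_mul hx, show 2 * t * s = t * s + t * s by ring, Real.exp_add,
    Real.sqrt_mul_self (Real.exp_nonneg _)]

lemma vol_nonneg {n : ℕ} (A : Matrix (Fin n) (Fin n) ℝ) (r₀ : Fin n → ℝ) (k : ℕ) (t : ℝ) :
    0 ≤ vol A r₀ k t := by
  rw [vol_sqrt]; exact Real.sqrt_nonneg _

lemma vol_le {n : ℕ} (d r₀ : Fin n → ℝ) (k : ℕ) {t : ℝ} (ht : 0 ≤ t) :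
    vol (Matrix.diagonal d) r₀ k t
      ≤ Real.sqrt ((k.factorial : ℝ)⁻¹ * ∑ f : Fin k → Fin n, beta d r₀ f)
          * Real.exp (t * msum (dvals d) k) := by
  have hU : (0:ℝ) ≤ (k.factorial : ℝ)⁻¹ * ∑ f : Fin k → Fin n, beta d r₀ f :=
    mul_nonneg (by positivity) (Finset.sum_nonneg fun f _ => beta_nonneg d r₀ f)
  rw [vol_sqrt, ← sqrt_mul_exp hU t]
  exact Real.sqrt_le_sqrt (gram_le d r₀ k ht)

lemma vol_ge {n : ℕ} {d : Fin n → ℝ} (r₀ : Fin n → ℝ) (hr : ∀ j, r₀ j ≠ 0) {k : ℕ}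
    (hk : k ≤ (dvals d).card) :
    ∃ c > (0:ℝ), ∀ t : ℝ, c * Real.exp (t * msum (dvals d) k)
      ≤ vol (Matrix.diagonal d) r₀ k t := by
  obtain ⟨L, hL, h⟩ := gram_ge r₀ hr hk
  refine ⟨Real.sqrt L, Real.sqrt_pos.2 hL, fun t => ?_⟩
  rw [vol_sqrt, ← sqrt_mul_exp hL.le t]
  exact Real.sqrt_le_sqrt (h t)

lemma curvature_tendsto_zero {n i : ℕ} (hi : 1 ≤ i) {d : Fin n → ℝ} (r₀ : Fin n → ℝ)
    (hr : ∀ j, r₀ j ≠ 0) {j0 : Fin n} (hj0 : 0 < d j0) :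
    Tendsto (fun t => curvature (Matrix.diagonal d) r₀ i t) atTop (nhds 0) := by
  classical
  obtain ⟨p, rfl⟩ : ∃ p, i = p + 1 := ⟨i - 1, (Nat.succ_pred_eq_of_pos hi).symm⟩
  have hsimp : ∀ t, curvature (Matrix.diagonal d) r₀ (p + 1) t
      = (vol (Matrix.diagonal d) r₀ p t * vol (Matrix.diagonal d) r₀ (p + 2) t)
        / (vol (Matrix.diagonal d) r₀ 1 t * vol (Matrix.diagonal d) r₀ (p + 1) t ^ 2) := by
    intro t
    rw [curvature]
    norm_num
  by_cases hm : p + 2 ≤ (dvals d).card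
  swap
  · -- degenerate case : the (p+2)-nd Gram determinant vanishes identically
    have hbz : ∀ f : Fin (p + 2) → Fin n, beta d r₀ f = 0 := by
      intro f
      apply beta_eq_zero
      rintro ⟨hinj, hnz⟩
      apply hm
      have hsub : Finset.univ.image (d ∘ f) ⊆ dvals d := by
        intro x hx
        obtain ⟨a, -, rfl⟩ := Finset.mem_image.1 hx
        exact Finset.mem_filter.2 ⟨Finset.mem_image.2 ⟨f a, Finset.mem_univ _, rfl⟩, hnz a⟩
      calc p + 2 = (Finset.univ.image (d ∘ f)).card := by
            rw [Finset.card_image_of_injective _ hinj, Finset.card_univ, Fintype.card_fin]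
        _ ≤ (dvals d).card := Finset.card_le_card hsub
    have hv0 : ∀ t, vol (Matrix.diagonal d) r₀ (p + 2) t = 0 := by
      intro t
      rw [vol_sqrt, gram_eq]
      simp only [hbz, zero_mul, Finset.sum_const_zero, mul_zero, Real.sqrt_zero]
    have heq : (fun t => curvature (Matrix.diagonal d) r₀ (p + 1) t) = fun _ : ℝ => (0:ℝ) :=
      funext fun t => by rw [hsimp t, hv0 t, mul_zero, zero_div]
    rw [heq]
    exact tendsto_const_nhds
  · -- main case
    set F := dvals d with hFdef
    have h1card : 1 ≤ F.card := by omega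
    have hpcard : p + 1 ≤ F.card := by omega
    obtain ⟨c1, hc1, hv1⟩ := vol_ge r₀ hr h1card
    obtain ⟨cp, hcp, hvp⟩ := vol_ge r₀ hr hpcard
    have hm1 : 0 < msum F 1 := by
      refine lt_of_lt_of_le hj0 (le_msum_one ?_)
      exact Finset.mem_filter.2 ⟨Finset.mem_image.2 ⟨j0, Finset.mem_univ _, rfl⟩, ne_of_gt hj0⟩
    have hconc := msum_concave (F := F) (j := p) hm
    set εv := msum F p + msum F (p + 2) - msum F 1 - 2 * msum F (p + 1) with hεv
    have hεneg : εv < 0 := by rw [hεv]; linarith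
    set X := Real.sqrt ((p.factorial : ℝ)⁻¹ * ∑ f : Fin p → Fin n, beta d r₀ f)
      * Real.sqrt (((p+2).factorial : ℝ)⁻¹ * ∑ f : Fin (p+2) → Fin n, beta d r₀ f) with hX
    have hXnn : 0 ≤ X := mul_nonneg (Real.sqrt_nonneg _) (Real.sqrt_nonneg _)
    set Y := c1 * cp ^ 2 with hY
    have hYpos : 0 < Y := mul_pos hc1 (pow_pos hcp 2)
    have hbound : ∀ t : ℝ, 0 ≤ t →
        curvature (Matrix.diagonal d) r₀ (p + 1) t ≤ (X / Y) * Real.exp (t * εv) := by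
      intro t ht
      rw [hsimp t]
      have hnum : vol (Matrix.diagonal d) r₀ p t * vol (Matrix.diagonal d) r₀ (p + 2) t
          ≤ X * Real.exp (t * (msum F p + msum F (p + 2))) := by
        calc vol (Matrix.diagonal d) r₀ p t * vol (Matrix.diagonal d) r₀ (p + 2) t
            ≤ (Real.sqrt ((p.factorial : ℝ)⁻¹ * ∑ f : Fin p → Fin n, beta d r₀ f)
                * Real.exp (t * msum F p))
              * (Real.sqrt (((p+2).factorial : ℝ)⁻¹ * ∑ f : Fin (p+2) → Fin n, beta d r₀ f)
                * Real.exp (t * msum F (p + 2))) := by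
              apply mul_le_mul (vol_le d r₀ p ht) (vol_le d r₀ (p+2) ht)
                (vol_nonneg _ _ _ _) (by positivity)
          _ = X * Real.exp (t * (msum F p + msum F (p + 2))) := by
              rw [hX, mul_mul_mul_comm, ← Real.exp_add]
              congr 1
              ring
      have hden : Y * Real.exp (t * (msum F 1 + 2 * msum F (p + 1)))
          ≤ vol (Matrix.diagonal d) r₀ 1 t * vol (Matrix.diagonal d) r₀ (p + 1) t ^ 2 := by
        have h2 : (cp * Real.exp (t * msum F (p + 1))) ^ 2
            ≤ vol (Matrix.diagonal d) r₀ (p + 1) t ^ 2 := by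
          apply pow_le_pow_left₀ (by positivity) (hvp t)
        calc Y * Real.exp (t * (msum F 1 + 2 * msum F (p + 1)))
            = (c1 * Real.exp (t * msum F 1)) * (cp * Real.exp (t * msum F (p + 1))) ^ 2 := by
              have he : Real.exp (t * (msum F 1 + 2 * msum F (p + 1)))
                  = Real.exp (t * msum F 1) * Real.exp (t * msum F (p + 1)) ^ 2 := by
                rw [sq, ← Real.exp_add, ← Real.exp_add]
                congr 1
                ring
              rw [hY, he, mul_pow]
              ring
          _ ≤ vol (Matrix.diagonal d) r₀ 1 t * vol (Matrix.diagonal d) r₀ (p + 1) t ^ 2 := by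
              apply mul_le_mul (hv1 t) h2 (by positivity) (vol_nonneg _ _ _ _)
      have hdenpos : (0:ℝ) < Y * Real.exp (t * (msum F 1 + 2 * msum F (p + 1))) := by positivity
      calc (vol (Matrix.diagonal d) r₀ p t * vol (Matrix.diagonal d) r₀ (p + 2) t)
            / (vol (Matrix.diagonal d) r₀ 1 t * vol (Matrix.diagonal d) r₀ (p + 1) t ^ 2)
          ≤ (X * Real.exp (t * (msum F p + msum F (p + 2))))
            / (Y * Real.exp (t * (msum F 1 + 2 * msum F (p + 1)))) :=
            div_le_div₀ (by positivity) hnum hdenpos hden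
        _ = (X / Y) * (Real.exp (t * (msum F p + msum F (p + 2)))
              / Real.exp (t * (msum F 1 + 2 * msum F (p + 1)))) :=
            (div_mul_div_comm _ _ _ _).symm
        _ = (X / Y) * Real.exp (t * εv) := by
            rw [← Real.exp_sub]
            congr 1
            rw [hεv]
            ring
    have hpos : ∀ t : ℝ, 0 ≤ curvature (Matrix.diagonal d) r₀ (p + 1) t := by
      intro t
      rw [hsimp t]
      apply div_nonneg (mul_nonneg (vol_nonneg _ _ _ _) (vol_nonneg _ _ _ _))
        (mul_nonneg (vol_nonneg _ _ _ _) (sq_nonneg _))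
    have htend : Tendsto (fun t : ℝ => (X / Y) * Real.exp (t * εv)) atTop (nhds 0) := by
      have h1 : Tendsto (fun t : ℝ => t * εv) atTop atBot :=
        tendsto_id.atTop_mul_const_of_neg hεneg
      have h2 : Tendsto (fun t : ℝ => Real.exp (t * εv)) atTop (nhds 0) :=
        Real.tendsto_exp_atBot.comp h1
      simpa using h2.const_mul (X / Y)
    apply tendsto_of_tendsto_of_tendsto_of_le_of_le' tendsto_const_nhds htend
      (Eventually.of_forall hpos)
      ((eventually_ge_atTop (0:ℝ)).mono fun t ht => hbound t ht)

end Auxiliary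

/-- If `A` is a real diagonal matrix, `r₀` has all coordinates nonzero and the
`i`-th curvature of the trajectory `t ↦ e^{tA} r₀` does not converge to `0` as `t → +∞`, then
the zero solution of `ṙ = A r` is stable. -/
theorem curvature_stability_diagonal {n : ℕ} (hn : 1 ≤ n) (i : ℕ) (hi : 1 ≤ i)
    (d : Fin n → ℝ) (r₀ : Fin n → ℝ) (hr : ∀ j, r₀ j ≠ 0)
    (hcurv : ¬ Tendsto (fun t => curvature (Matrix.diagonal d) r₀ i t) atTop (nhds 0)) :
    IsStable (Matrix.diagonal d) := by
  have key : ∀ j, d j ≤ 0 := by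
    intro j
    by_contra hj
    push_neg at hj
    exact hcurv (curvature_tendsto_zero hi r₀ hr hj)
  exact isStable_of_nonpos key
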